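/- arXiv:1710.08707 — 4 statements merged into one kernel-verified Lean document; each statement's English description precedes it below -/
import Mathlib

section
/- For all ε, δ ∈ (0, ∞) there exists a constant c ∈ (0, ∞) with the following property: for every N ∈ ℕ with N ≥ 1 and all independent real-valued random variables Z₁, …, Z_N, each normally distributed (with arbitrary mean) with variance at least δ², one has P( Σ_{i=1}^N |Z_i| ≥ c·N ) ≥ 1 − ε. -/
/-!
A Gaussian of variance at least `δ²` has density at most `1 / (2δ)`, so `P(|Z_i| < t) ≤ t / δ`.
Markov's inequality for the number of indices with `|Z_i| < t` shows that, outside an event of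
probability at most `2t / δ`, fewer than half of the `|Z_i|` lie below `t`, and then
`∑ |Z_i| ≥ t N / 2`. Take `t = εδ / 2`.
-/

open MeasureTheory ProbabilityTheory Real Finset
open scoped NNReal ENNReal

lemma gaussianPDFReal_le_inv_sqrt (μ : ℝ) (v : ℝ≥0) (x : ℝ) :
    gaussianPDFReal μ v x ≤ (√(2 * π * v))⁻¹ := by
  rw [gaussianPDFReal_def]
  refine mul_le_of_le_one_right (by positivity) (exp_le_one_iff.2 ?_)
  exact div_nonpos_of_nonpos_of_nonneg (neg_nonpos.2 (sq_nonneg _)) (by positivity)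

lemma gaussianReal_le_smul_volume (μ : ℝ) {v : ℝ≥0} {δ : ℝ} (hδ : 0 < δ) (hv : δ ^ 2 ≤ v) :
    gaussianReal μ v ≤ ENNReal.ofReal (2 * δ)⁻¹ • volume := by
  have hv0 : v ≠ 0 := by
    rintro rfl
    exact (pow_pos hδ 2).not_ge (by exact_mod_cast hv)
  rw [gaussianReal_of_var_ne_zero μ hv0, ← withDensity_const]
  refine withDensity_mono (ae_of_all _ fun x ↦ ENNReal.ofReal_le_ofReal ?_)
  have hsqrt : 2 * δ ≤ √(2 * π * v) :=
    le_sqrt_of_sq_le (by nlinarith [pi_gt_three])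
  exact (gaussianPDFReal_le_inv_sqrt μ v x).trans (inv_anti₀ (by positivity) hsqrt)

lemma measure_abs_lt_le_of_map_eq_gaussianReal {Ω : Type*} [MeasurableSpace Ω] {P : Measure Ω}
    {X : Ω → ℝ} {m : ℝ} {v : ℝ≥0} {δ : ℝ} (hX : P.map X = gaussianReal m v) (hδ : 0 < δ)
    (hv : δ ^ 2 ≤ v) (t : ℝ) :
    P {ω | |X ω| < t} ≤ ENNReal.ofReal (t / δ) := by
  have hXm : AEMeasurable X P := .of_map_ne_zero (by rw [hX]; exact IsProbabilityMeasure.ne_zero _)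
  calc P {ω | |X ω| < t} = P (X ⁻¹' Set.Ioo (-t) t) := by congr 1; ext ω; exact abs_lt (a := X ω)
    _ = gaussianReal m v (Set.Ioo (-t) t) := by
        rw [← hX, Measure.map_apply₀ hXm measurableSet_Ioo.nullMeasurableSet]
    _ ≤ ENNReal.ofReal (2 * δ)⁻¹ * volume (Set.Ioo (-t) t) := gaussianReal_le_smul_volume m hδ hv _
    _ = ENNReal.ofReal (t / δ) := by
        rw [volume_Ioo, ← ENNReal.ofReal_mul (by positivity)]
        congr 1
        field_simp
        ring

lemma mul_card_filter_le_abs_le_sum_abs {ι : Type*} [Fintype ι] (z : ι → ℝ) (t : ℝ) :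
    t * #{i | t ≤ |z i|} ≤ ∑ i, |z i| := by
  calc t * #{i | t ≤ |z i|} = #{i | t ≤ |z i|} • t := by rw [nsmul_eq_mul, mul_comm]
    _ ≤ ∑ i ∈ {i | t ≤ |z i|}, |z i| := card_nsmul_le_sum _ _ _ fun i hi ↦ (mem_filter.1 hi).2
    _ ≤ ∑ i, |z i| := sum_le_sum_of_subset_of_nonneg (subset_univ _) fun i _ _ ↦ abs_nonneg _

lemma card_div_two_lt_card_filter_abs_lt {ι : Type*} [Fintype ι] {z : ι → ℝ} {t : ℝ}
    (h : ∑ i, |z i| < t * Fintype.card ι / 2) :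
    (Fintype.card ι : ℝ) / 2 < #{i | |z i| < t} := by
  have hsplit : #{i | t ≤ |z i|} + #{i | |z i| < t} = Fintype.card ι := by
    simpa only [not_le, card_univ] using
      card_filter_add_card_filter_not (s := univ) (fun i ↦ t ≤ |z i|)
  have hcount := mul_card_filter_le_abs_le_sum_abs z t
  have ht : 0 < t := by
    refine pos_of_mul_pos_left ?_ (Nat.cast_nonneg (Fintype.card ι))
    linarith [sum_nonneg fun i (_ : i ∈ univ) ↦ abs_nonneg (z i)]
  rw [← hsplit] at h ⊢
  push_cast at h ⊢
  nlinarith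

open scoped Classical in
lemma mul_measure_le_card_mem_le_sum {Ω ι : Type*} [MeasurableSpace Ω] [Fintype ι]
    {μ : Measure Ω} {A : ι → Set Ω} (hA : ∀ i, NullMeasurableSet (A i) μ) (k : ℝ≥0∞) :
    k * μ {ω | k ≤ #{i | ω ∈ A i}} ≤ ∑ i, μ (A i) := by
  have hcount (ω : Ω) : (#{i | ω ∈ A i} : ℝ≥0∞) = ∑ i, (A i).indicator 1 ω := by
    simp [Set.indicator_apply, sum_boole]
  have hind : ∀ i, AEMeasurable ((A i).indicator (1 : Ω → ℝ≥0∞)) μ :=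
    fun i ↦ aemeasurable_const.indicator₀ (hA i)
  calc k * μ {ω | k ≤ #{i | ω ∈ A i}}
      ≤ ∫⁻ ω, ∑ i, (A i).indicator 1 ω ∂μ := by
        simp_rw [hcount]
        exact mul_meas_ge_le_lintegral₀ (aemeasurable_fun_sum _ fun i _ ↦ hind i) k
    _ = ∑ i, μ (A i) := by
        rw [lintegral_finsetSum' _ fun i _ ↦ hind i]
        exact sum_congr rfl fun i _ ↦ lintegral_indicator_one₀ (hA i)

lemma one_sub_le_toReal_of_measure_compl_le {Ω : Type*} [MeasurableSpace Ω] {P : Measure Ω}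
    [IsProbabilityMeasure P] {s : Set Ω} {ε : ℝ} (hε : 0 ≤ ε) (hs : P sᶜ ≤ ENNReal.ofReal ε) :
    1 - ε ≤ (P s).toReal := by
  have hcover : (1 : ℝ≥0∞) ≤ P s + ENNReal.ofReal ε :=
    calc 1 = P Set.univ := measure_univ.symm
      _ ≤ P s + P sᶜ := measure_univ_le_add_compl s
      _ ≤ P s + ENNReal.ofReal ε := by gcongr
  have h := ENNReal.toReal_mono (by finiteness) hcover
  rw [ENNReal.toReal_add (measure_ne_top _ _) ENNReal.ofReal_ne_top,
    ENNReal.toReal_ofReal hε, ENNReal.toReal_one] at h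
  linarith

/-- For all `ε, δ > 0` there is `c > 0` such that for every `N ≥ 1` and all independent
real random variables `Z₁, …, Z_N`, each Gaussian with variance at least `δ²`,
`P(∑ |Z_i| ≥ c N) ≥ 1 - ε`. -/
theorem stmt_1 (ε δ : ℝ) (hε : 0 < ε) (hδ : 0 < δ) :
    ∃ c : ℝ, 0 < c ∧
      ∀ (Ω : Type) (_ : MeasurableSpace Ω) (P : Measure Ω) (_ : IsProbabilityMeasure P)
        (N : ℕ) (_ : 1 ≤ N) (Z : Fin N → Ω → ℝ) (μ : Fin N → ℝ) (v : Fin N → ℝ≥0),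
        iIndepFun Z P →
        (∀ i, Measure.map (Z i) P = gaussianReal (μ i) (v i)) →
        (∀ i, δ ^ 2 ≤ (v i : ℝ)) →
        1 - ε ≤ (P {ω | c * N ≤ ∑ i, |Z i ω|}).toReal := by
  classical
  refine ⟨ε * δ / 4, by positivity, ?_⟩
  intro Ω _ P _ N hN Z μ v _ hlaw hvar
  set t := ε * δ / 2 with ht
  set A : Fin N → Set Ω := fun i ↦ {ω | |Z i ω| < t}
  have hA (i : Fin N) : NullMeasurableSet (A i) P :=
    have hZ : AEMeasurable (Z i) P :=
      .of_map_ne_zero (by rw [hlaw i]; exact IsProbabilityMeasure.ne_zero _)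
    nullMeasurableSet_lt hZ.abs aemeasurable_const
  have hA_le (i : Fin N) : P (A i) ≤ ENNReal.ofReal (ε / 2) := by
    convert measure_abs_lt_le_of_map_eq_gaussianReal (hlaw i) hδ (hvar i) t using 2
    rw [ht]
    field_simp
  set k := ENNReal.ofReal (N / 2)
  have hbad : {ω | ε * δ / 4 * N ≤ ∑ i, |Z i ω|}ᶜ ⊆ {ω | k ≤ #{i | ω ∈ A i}} := fun ω hω ↦ by
    have hsum : ∑ i, |Z i ω| < t * Fintype.card (Fin N) / 2 :=
      calc ∑ i, |Z i ω| < ε * δ / 4 * N := not_le.1 hω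
        _ = t * Fintype.card (Fin N) / 2 := by rw [Fintype.card_fin, ht]; ring
    have hcard := (card_div_two_lt_card_filter_abs_lt hsum).le
    rw [Fintype.card_fin] at hcard
    exact (ENNReal.ofReal_le_ofReal hcard).trans_eq (ENNReal.ofReal_natCast _)
  have hmarkov : P {ω | k ≤ #{i | ω ∈ A i}} ≤ ENNReal.ofReal ε := by
    have h := (mul_measure_le_card_mem_le_sum hA k).trans
      (sum_le_card_nsmul _ _ _ fun i _ ↦ hA_le i)
    rw [card_univ, Fintype.card_fin, nsmul_eq_mul, ← ENNReal.ofReal_natCast,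
      ← ENNReal.ofReal_mul (by positivity), show (N : ℝ) * (ε / 2) = N / 2 * ε by ring,
      ENNReal.ofReal_mul (by positivity)] at h
    have hk : k ≠ 0 := (ENNReal.ofReal_pos.2 (by positivity)).ne'
    exact (ENNReal.mul_le_mul_iff_right hk ENNReal.ofReal_ne_top).1 h
  exact one_sub_le_toReal_of_measure_compl_le hε.le ((measure_mono hbad).trans hmarkov)
end

section
/- For all ε, δ ∈ (0, ∞) there exists a constant c ∈ (0, ∞) with the following property: for every N ∈ ℕ with N ≥ 1 and all independent real-valued random variables Z₁, …, Z_N, each normally distributed (with arbitrary mean) with variance at least δ², one has P( max_{i=1,…,N} |Z_i| ≥ c·√(ln N) ) ≥ 1 − ε. -/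
/-!
Put `t = a δ √(ln N)`. By independence, `P(max_i |Z_i| < t) = ∏_i P(|Z_i| < t)`. A Gaussian
density of variance `v ≥ δ²` is at most `1 / (2δ)`, so every factor is at most `t / δ = a √(ln N)`;
integrating the density over an interval of length `√v` at distance `t` from `0` on the side of
the mean shows that every factor is also at most `1 - e^{-(a √(ln N) + 1)² / 2} / √(2π)`.
While `ln N` stays below a threshold depending only on `ε`, the first bound is `≤ ε` for small
`a`. Above it, `a ≤ 1/2` makes `N` times the tail term at least `√N / (e √(2π))`, so the `N`-th
power of the second bound is at most `exp (-√N / (e √(2π))) ≤ ε`.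
-/

open MeasureTheory ProbabilityTheory Real Set
open scoped NNReal ENNReal

namespace ProbabilityTheory

lemma gaussianPDFReal_le_inv_sqrt (m : ℝ) (v : ℝ≥0) (x : ℝ) :
    gaussianPDFReal m v x ≤ (√(2 * π * v))⁻¹ :=
  mul_le_of_le_one_right (by positivity)
    (exp_le_one_iff.2 (div_nonpos_of_nonpos_of_nonneg (neg_nonpos.2 (sq_nonneg _)) (by positivity)))

lemma inv_sqrt_mul_exp_le_gaussianPDFReal (m : ℝ) (v : ℝ≥0) {x R : ℝ} (hx : |x - m| ≤ R) :
    (√(2 * π * v))⁻¹ * exp (-R ^ 2 / (2 * v)) ≤ gaussianPDFReal m v x := by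
  have hsq : (x - m) ^ 2 ≤ R ^ 2 := sq_le_sq' (abs_le.1 hx).1 (abs_le.1 hx).2
  unfold gaussianPDFReal
  gcongr

lemma gaussianReal_le_ofReal_mul_volume (m : ℝ) {v : ℝ≥0} (hv : v ≠ 0) (s : Set ℝ) :
    gaussianReal m v s ≤ ENNReal.ofReal (√(2 * π * v))⁻¹ * volume s := by
  rw [gaussianReal_apply m hv, ← setLIntegral_const]
  exact lintegral_mono fun x ↦ ENNReal.ofReal_le_ofReal (gaussianPDFReal_le_inv_sqrt m v x)

lemma ofReal_mul_volume_le_gaussianReal (m : ℝ) {v : ℝ≥0} (hv : v ≠ 0) {s : Set ℝ} {R : ℝ}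
    (hR : ∀ x ∈ s, |x - m| ≤ R) :
    ENNReal.ofReal ((√(2 * π * v))⁻¹ * exp (-R ^ 2 / (2 * v))) * volume s ≤ gaussianReal m v s := by
  rw [gaussianReal_apply m hv, ← setLIntegral_const]
  exact setLIntegral_mono (measurable_gaussianPDF m v) fun x hx ↦
    ENNReal.ofReal_le_ofReal (inv_sqrt_mul_exp_le_gaussianPDFReal m v (hR x hx))

lemma gaussianReal_real_Ioo_neg_le {m : ℝ} {v : ℝ≥0} {δ t : ℝ} (hδ : 0 < δ) (ht : 0 ≤ t)
    (hv : δ ^ 2 ≤ v) : (gaussianReal m v).real (Ioo (-t) t) ≤ t / δ := by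
  have hv0 : v ≠ 0 := by rintro rfl; simp only [NNReal.coe_zero] at hv; nlinarith
  have h2δ : 2 * δ ≤ √(2 * π * v) := le_sqrt_of_sq_le (by nlinarith [pi_gt_three])
  have hfin : ENNReal.ofReal (√(2 * π * v))⁻¹ * volume (Ioo (-t) t) ≠ ∞ :=
    (ENNReal.mul_lt_top ENNReal.ofReal_lt_top measure_Ioo_lt_top).ne
  calc (gaussianReal m v).real (Ioo (-t) t)
      ≤ (ENNReal.ofReal (√(2 * π * v))⁻¹ * volume (Ioo (-t) t)).toReal :=
        ENNReal.toReal_mono hfin (gaussianReal_le_ofReal_mul_volume m hv0 _)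
    _ = 2 * t / √(2 * π * v) := by
        rw [volume_Ioo, ← ENNReal.ofReal_mul (by positivity),
          ENNReal.toReal_ofReal (mul_nonneg (by positivity) (by linarith))]
        ring
    _ ≤ 2 * t / (2 * δ) := div_le_div_of_nonneg_left (by positivity) (by positivity) h2δ
    _ = t / δ := by field_simp

noncomputable def gaussianTailMinorant (s : ℝ) : ℝ := (√(2 * π))⁻¹ * exp (-(s + 1) ^ 2 / 2)

lemma gaussianTailMinorant_nonneg (s : ℝ) : 0 ≤ gaussianTailMinorant s := by
  unfold gaussianTailMinorant; positivity

lemma gaussianTailMinorant_le_one (s : ℝ) : gaussianTailMinorant s ≤ 1 := by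
  have h1 : 1 ≤ √(2 * π) := one_le_sqrt.2 (by nlinarith [pi_gt_three])
  have h2 : exp (-(s + 1) ^ 2 / 2) ≤ 1 :=
    exp_le_one_iff.2 (div_nonpos_of_nonpos_of_nonneg (neg_nonpos.2 (sq_nonneg _)) zero_le_two)
  calc gaussianTailMinorant s ≤ (√(2 * π))⁻¹ * 1 := by unfold gaussianTailMinorant; gcongr
    _ ≤ 1 := by rw [mul_one]; exact inv_le_one_of_one_le₀ h1

lemma gaussianTailMinorant_le_of_le {s s' : ℝ} (hs : 0 ≤ s) (h : s ≤ s') :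
    gaussianTailMinorant s' ≤ gaussianTailMinorant s := by
  unfold gaussianTailMinorant; gcongr

lemma gaussianTailMinorant_le_gaussianReal_real {m t : ℝ} {v : ℝ≥0} (hv : v ≠ 0) (ht : 0 ≤ t) :
    gaussianTailMinorant (t / √v) ≤ (gaussianReal m v).real {x | t ≤ |x|} := by
  set σ := √(v : ℝ) with hσ_def
  have hσ : 0 < σ := sqrt_pos.2 (by positivity)
  have hvσ : (v : ℝ) = σ ^ 2 := (sq_sqrt v.2).symm
  obtain ⟨a, hsub, hdist⟩ : ∃ a, Icc a (a + σ) ⊆ {x | t ≤ |x|} ∧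
      ∀ x ∈ Icc a (a + σ), |x - m| ≤ t + σ := by
    rcases le_total 0 m with hm | hm
    · refine ⟨m + t, fun x hx ↦ ?_, fun x hx ↦ abs_le.2 ⟨?_, ?_⟩⟩
      · exact (by linarith [hx.1] : t ≤ x).trans (le_abs_self x)
      all_goals linarith [hx.1, hx.2]
    · refine ⟨m - t - σ, fun x hx ↦ ?_, fun x hx ↦ abs_le.2 ⟨?_, ?_⟩⟩
      · exact (by linarith [hx.2] : t ≤ -x).trans (neg_le_abs x)
      all_goals linarith [hx.1, hx.2]
  have key := (ofReal_mul_volume_le_gaussianReal m hv hdist).trans (measure_mono hsub)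
  rw [volume_Icc, add_sub_cancel_left, ← ENNReal.ofReal_mul (by positivity)] at key
  have hle := ENNReal.toReal_mono (measure_ne_top _ _) key
  rw [ENNReal.toReal_ofReal (by positivity)] at hle
  refine le_of_eq_of_le ?_ hle
  have hexp : -(t / σ + 1) ^ 2 / 2 = -(t + σ) ^ 2 / (2 * v) := by rw [hvσ]; field_simp
  rw [gaussianTailMinorant, hexp, sqrt_mul (by positivity) (v : ℝ), ← hσ_def]
  field_simp

lemma gaussianReal_real_Ioo_neg_le_one_sub {m : ℝ} {v : ℝ≥0} {δ t : ℝ} (hδ : 0 < δ) (ht : 0 ≤ t)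
    (hv : δ ^ 2 ≤ v) :
    (gaussianReal m v).real (Ioo (-t) t) ≤ 1 - gaussianTailMinorant (t / δ) := by
  have hv0 : v ≠ 0 := by rintro rfl; simp only [NNReal.coe_zero] at hv; nlinarith
  have hδv : t / √v ≤ t / δ := div_le_div_of_nonneg_left ht hδ (le_sqrt_of_sq_le hv)
  have hdisj : Ioo (-t) t ⊆ {x | t ≤ |x|}ᶜ := fun x hx ↦ not_le.2 (abs_lt.2 hx)
  calc (gaussianReal m v).real (Ioo (-t) t)
      ≤ (gaussianReal m v).real {x | t ≤ |x|}ᶜ := measureReal_mono hdisj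
    _ = 1 - (gaussianReal m v).real {x | t ≤ |x|} :=
        probReal_compl_eq_one_sub (measurableSet_le measurable_const continuous_abs.measurable)
    _ ≤ 1 - gaussianTailMinorant (t / δ) := by
        linarith [gaussianTailMinorant_le_of_le (by positivity) hδv,
          gaussianTailMinorant_le_gaussianReal_real (m := m) hv0 ht]

lemma exp_half_log_div_le_mul_gaussianTailMinorant {a : ℝ} (ha : 0 ≤ a) (ha' : a ≤ 1 / 2)
    {N : ℕ} (hN : 1 ≤ N) :
    exp (log N / 2) / (exp 1 * √(2 * π)) ≤ N * gaussianTailMinorant (a * √(log N)) := by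
  have hL : 0 ≤ log N := log_nonneg (by exact_mod_cast hN)
  have hsq : (a * √(log N) + 1) ^ 2 / 2 ≤ log N / 2 + 1 := by
    have : (a * √(log N)) ^ 2 ≤ log N / 4 := by
      rw [mul_pow, sq_sqrt hL]
      nlinarith [mul_le_mul_of_nonneg_right (show a ^ 2 ≤ 1 / 4 by nlinarith) hL]
    nlinarith [sq_nonneg (a * √(log N) - 1)]
  have hN_exp : (N : ℝ) = exp (log N) := (exp_log (by exact_mod_cast hN)).symm
  calc exp (log N / 2) / (exp 1 * √(2 * π))
      = exp (log N) * ((√(2 * π))⁻¹ * exp (-(log N / 2 + 1))) := by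
        rw [mul_left_comm, ← exp_add, show log N + -(log N / 2 + 1) = log N / 2 - 1 by ring,
          exp_sub]
        field_simp
    _ ≤ N * gaussianTailMinorant (a * √(log N)) := by
        rw [← hN_exp, gaussianTailMinorant]; gcongr; linarith

lemma exists_min_gaussianTailMinorant_pow_le {ε : ℝ} (hε : 0 < ε) :
    ∃ a > 0, ∀ N : ℕ, 1 ≤ N →
      min (a * √(log N)) (1 - gaussianTailMinorant (a * √(log N))) ^ N ≤ ε := by
  set K := exp 1 * √(2 * π)
  -- beyond `L₀`, `exp (L / 2) ≥ L / 2 + 1 ≥ K * |log ε|`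
  set L₀ := 2 * K * |log ε| + 1
  have hL₀ : 0 < L₀ := by positivity
  refine ⟨min (1 / 2) (ε / √L₀), by positivity, fun N hN ↦ ?_⟩
  set a := min (1 / 2) (ε / √L₀)
  set L := log N
  set s := a * √L
  have hL : 0 ≤ L := log_nonneg (by exact_mod_cast hN)
  have hg := gaussianTailMinorant_le_one s
  have hQ : 0 ≤ min s (1 - gaussianTailMinorant s) := le_min (by positivity) (by linarith)
  rcases le_total L L₀ with hsmall | hlarge
  · calc min s (1 - gaussianTailMinorant s) ^ N ≤ min s (1 - gaussianTailMinorant s) :=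
          pow_le_of_le_one hQ ((min_le_right _ _).trans
            (by linarith [gaussianTailMinorant_nonneg s])) (by omega)
      _ ≤ a * √L₀ := (min_le_left _ _).trans
          (mul_le_mul_of_nonneg_left (sqrt_le_sqrt hsmall) (by positivity))
      _ ≤ ε := (le_div_iff₀ (by positivity)).1 (min_le_right _ _)
  · have hNg : -log ε ≤ N * gaussianTailMinorant s := calc
        -log ε ≤ (L / 2 + 1) / K := by
          rw [le_div_iff₀ (by positivity)]
          linarith [mul_le_mul_of_nonneg_right (neg_le_abs (log ε)) (by positivity : (0 : ℝ) ≤ K)]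
      _ ≤ exp (L / 2) / K := by gcongr; linarith [add_one_le_exp (L / 2)]
      _ ≤ N * gaussianTailMinorant s :=
          exp_half_log_div_le_mul_gaussianTailMinorant (by positivity) (min_le_left _ _) hN
    calc min s (1 - gaussianTailMinorant s) ^ N ≤ (1 - gaussianTailMinorant s) ^ N := by
          gcongr; exact min_le_right _ _
      _ ≤ exp (-gaussianTailMinorant s) ^ N :=
          pow_le_pow_left₀ (by linarith) (one_sub_le_exp_neg _) N
      _ = exp (-(N * gaussianTailMinorant s)) := by rw [← exp_nat_mul]; ring_nf
      _ ≤ exp (log ε) := exp_le_exp.2 (by linarith)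
      _ = ε := exp_log hε

lemma iIndepFun.measureReal_exists_notMem {Ω ι β : Type*} [MeasurableSpace Ω] [MeasurableSpace β]
    [Fintype ι] {P : Measure Ω} [IsProbabilityMeasure P] {Z : ι → Ω → β} (hZ : iIndepFun Z P)
    (hZm : ∀ i, AEMeasurable (Z i) P) {s : Set β} (hs : MeasurableSet s) :
    P.real {ω | ∃ i, Z i ω ∉ s} = 1 - ∏ i, (P.map (Z i)).real s := by
  have hcompl : {ω | ∃ i, Z i ω ∉ s} = (⋂ i, Z i ⁻¹' s)ᶜ := by ext; simp
  rw [hcompl, probReal_compl_eq_one_sub₀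
    (.iInter fun i ↦ (hZm i).nullMeasurableSet_preimage hs), measureReal_def,
    hZ.meas_iInter fun i ↦ ⟨s, hs, rfl⟩, ENNReal.toReal_prod]
  simp_rw [map_measureReal_apply_of_aemeasurable (hZm _) hs, measureReal_def]

end ProbabilityTheory

/-- For all `ε, δ > 0` there is `c > 0` such that for every `N ≥ 1` and all independent
real random variables `Z₁, …, Z_N`, each Gaussian with variance at least `δ²`,
`P(max_i |Z_i| ≥ c √(ln N)) ≥ 1 - ε`. -/
theorem stmt_2 (ε δ : ℝ) (hε : 0 < ε) (hδ : 0 < δ) :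
    ∃ c : ℝ, 0 < c ∧
      ∀ (Ω : Type) (_ : MeasurableSpace Ω) (P : Measure Ω) (_ : IsProbabilityMeasure P)
        (N : ℕ) (_ : 1 ≤ N) (Z : Fin N → Ω → ℝ) (μ : Fin N → ℝ) (v : Fin N → ℝ≥0),
        iIndepFun Z P →
        (∀ i, Measure.map (Z i) P = gaussianReal (μ i) (v i)) →
        (∀ i, δ ^ 2 ≤ (v i : ℝ)) →
        1 - ε ≤ (P {ω | ∃ i, c * Real.sqrt (Real.log N) ≤ |Z i ω|}).toReal := by
  obtain ⟨a, ha, hpow⟩ := exists_min_gaussianTailMinorant_pow_le hε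
  refine ⟨a * δ, by positivity, fun Ω _ P _ N hN Z μ v hZ hlaw hv ↦ ?_⟩
  set t := a * δ * √(log N)
  have ht : 0 ≤ t := by positivity
  have htδ : t / δ = a * √(log N) := by simp only [t]; field_simp
  have hZm : ∀ i, AEMeasurable (Z i) P := fun i ↦
    aemeasurable_of_map_neZero (by rw [hlaw i]; infer_instance)
  have hfactor : ∀ i, (P.map (Z i)).real (Ioo (-t) t) ≤
      min (a * √(log N)) (1 - gaussianTailMinorant (a * √(log N))) := fun i ↦ by
    rw [hlaw i, ← htδ]
    exact le_min (gaussianReal_real_Ioo_neg_le hδ ht (hv i))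
      (gaussianReal_real_Ioo_neg_le_one_sub hδ ht (hv i))
  have hevent : {ω | ∃ i, t ≤ |Z i ω|} = {ω | ∃ i, Z i ω ∉ Ioo (-t) t} := by
    ext ω; exact exists_congr fun i ↦ by rw [mem_Ioo, ← abs_lt, not_lt]
  rw [← measureReal_def, hevent, hZ.measureReal_exists_notMem hZm measurableSet_Ioo]
  have hprod := Finset.prod_le_prod (s := .univ) (fun i _ ↦ measureReal_nonneg)
    (fun i _ ↦ hfactor i)
  rw [Finset.prod_const, Finset.card_univ, Fintype.card_fin] at hprod
  linarith [hpow N hN]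
end

section
/- Let k ∈ ℕ with k ≥ 1, let d₀, …, d_{k−1} be nonnegative integers with Σ_{ℓ=0}^{k−1} d_ℓ ≤ k, and let y₀, …, y_{k−1} ∈ ℝ. Then ( Σ_{ℓ=0}^{k−1} |y_ℓ|^{2/3} )³ ≤ 4k² · Σ_{ℓ=0}^{k−1} ( y_ℓ / (d_ℓ + 1) )². -/
/-!
With the weights `w ℓ = d ℓ + 1`, whose sum is at most `2k`, the claim is Radon's inequality
`(∑ a)³ ≤ (∑ w)² · ∑ a³ / w²` for `a ℓ = |y ℓ|^(2/3)`. Radon's inequality is Jensen's inequality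
for `x ↦ xⁿ⁺¹` at the points `a i / w i` with the weights `w i / ∑ w`.
-/

open Finset Real

theorem Finset.pow_sum_le_pow_sum_mul_sum_pow_div_pow {ι : Type*} (s : Finset ι) (n : ℕ)
    {a w : ι → ℝ} (ha : ∀ i ∈ s, 0 ≤ a i) (hw : ∀ i ∈ s, 0 < w i) :
    (∑ i ∈ s, a i) ^ (n + 1) ≤ (∑ i ∈ s, w i) ^ n * ∑ i ∈ s, a i ^ (n + 1) / w i ^ n := by
  rcases s.eq_empty_or_nonempty with rfl | hs
  · simp
  set W := ∑ i ∈ s, w i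
  have hW : 0 < W := sum_pos hw hs
  have jensen := (convexOn_pow (n + 1)).map_sum_le (t := s) (w := fun i => w i / W)
    (p := fun i => a i / w i) (fun i hi => (div_pos (hw i hi) hW).le)
    (by rw [← sum_div, div_self hW.ne']) (fun i hi => div_nonneg (ha i hi) (hw i hi).le)
  have hmean : ∑ i ∈ s, w i / W * (a i / w i) = (∑ i ∈ s, a i) / W := by
    rw [sum_div]
    refine sum_congr rfl fun i hi => ?_
    field_simp [(hw i hi).ne']
  have hpow : ∑ i ∈ s, w i / W * (a i / w i) ^ (n + 1)
      = (∑ i ∈ s, a i ^ (n + 1) / w i ^ n) / W := by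
    rw [sum_div]
    refine sum_congr rfl fun i hi => ?_
    rw [div_pow, pow_succ (w i)]
    field_simp [(hw i hi).ne']
  simp only [smul_eq_mul] at jensen
  rw [hmean, hpow, div_pow, div_le_iff₀ (by positivity)] at jensen
  calc (∑ i ∈ s, a i) ^ (n + 1)
      ≤ (∑ i ∈ s, a i ^ (n + 1) / w i ^ n) / W * W ^ (n + 1) := jensen
    _ = W ^ n * ∑ i ∈ s, a i ^ (n + 1) / w i ^ n := by
        rw [pow_succ]
        field_simp

theorem stmt_7_general (k : ℕ) (d : Fin k → ℕ) (hd : ∑ ℓ, d ℓ ≤ k)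
    (y : Fin k → ℝ) :
    (∑ ℓ, |y ℓ| ^ ((2 : ℝ) / 3)) ^ 3
      ≤ 4 * (k : ℝ) ^ 2 * ∑ ℓ, (y ℓ / ((d ℓ : ℝ) + 1)) ^ 2 := by
  have hw : ∀ ℓ, (0 : ℝ) < d ℓ + 1 := fun ℓ => by positivity
  have hW : ∑ ℓ, ((d ℓ : ℝ) + 1) ≤ 2 * k := by
    have : (∑ ℓ, d ℓ : ℝ) ≤ k := by exact_mod_cast hd
    simp only [sum_add_distrib, sum_const, card_univ, Fintype.card_fin, nsmul_eq_mul, mul_one]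
    linarith
  have hterm : ∀ ℓ, (|y ℓ| ^ ((2 : ℝ) / 3)) ^ 3 / ((d ℓ : ℝ) + 1) ^ 2
      = (y ℓ / ((d ℓ : ℝ) + 1)) ^ 2 := fun ℓ => by
    rw [← rpow_natCast, ← rpow_mul (abs_nonneg _), div_pow, ← sq_abs (y ℓ)]
    norm_num
  calc (∑ ℓ, |y ℓ| ^ ((2 : ℝ) / 3)) ^ 3
      ≤ (∑ ℓ, ((d ℓ : ℝ) + 1)) ^ 2 * ∑ ℓ, (|y ℓ| ^ ((2 : ℝ) / 3)) ^ 3 / ((d ℓ : ℝ) + 1) ^ 2 :=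
        pow_sum_le_pow_sum_mul_sum_pow_div_pow _ 2 (fun ℓ _ => by positivity) (fun ℓ _ => hw ℓ)
    _ ≤ (2 * k : ℝ) ^ 2 * ∑ ℓ, (|y ℓ| ^ ((2 : ℝ) / 3)) ^ 3 / ((d ℓ : ℝ) + 1) ^ 2 := by
        gcongr
    _ = 4 * (k : ℝ) ^ 2 * ∑ ℓ, (y ℓ / ((d ℓ : ℝ) + 1)) ^ 2 := by
        simp only [hterm]
        ring

/-- Hölder-type inequality: if `∑ d_ℓ ≤ k` then
`(∑ |y_ℓ|^{2/3})³ ≤ 4 k² ∑ (y_ℓ/(d_ℓ+1))²`. -/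
theorem stmt_7 (k : ℕ) (hk : 1 ≤ k) (d : Fin k → ℕ) (hd : ∑ ℓ, d ℓ ≤ k)
    (y : Fin k → ℝ) :
    (∑ ℓ, |y ℓ| ^ ((2 : ℝ) / 3)) ^ 3
      ≤ 4 * (k : ℝ) ^ 2 * ∑ ℓ, (y ℓ / ((d ℓ : ℝ) + 1)) ^ 2 :=
  stmt_7_general k d hd y
end

section
/- Let T ∈ (0, ∞), let f, g : [0, T] → ℝ be continuous functions, and let I ⊆ ℝ be an open interval. Define τ₀ = min( inf{t ∈ [0,T] : f(t) ∉ I}, inf{t ∈ [0,T] : g(t) ∉ I}, T ), where the infimum of the empty set is taken to be +∞. Assume that for all t ∈ [0, T] one has f(min(t, τ₀)) = g(min(t, τ₀)) and f(t) ∈ I. Then f(t) = g(t) for all t ∈ [0, T]. -/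
open Set

theorem ContinuousOn.csInf_exitSet_union_singleton_mem {α β : Type*}
    [ConditionallyCompleteLinearOrder α] [TopologicalSpace α] [OrderTopology α]
    [TopologicalSpace β] {g : α → β} {a b : α} {U : Set β}
    (hg : ContinuousOn g (Icc a b)) (hU : IsOpen U) :
    sInf ({t ∈ Icc a b | g t ∉ U} ∪ {b}) ∈ {t ∈ Icc a b | g t ∉ U} ∪ {b} := by
  have hclosed : IsClosed ({t ∈ Icc a b | g t ∉ U} ∪ {b}) :=
    (hg.preimage_isClosed_of_isClosed isClosed_Icc hU.isClosed_compl).union isClosed_singleton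
  exact hclosed.csInf_mem ⟨b, Or.inr rfl⟩
    ((bddBelow_Icc.mono (sep_subset _ _)).union bddBelow_singleton)

theorem stmt_8_general (T : ℝ) (f g : ℝ → ℝ)
    (hg : ContinuousOn g (Set.Icc 0 T))
    (I : Set ℝ) (hIopen : IsOpen I)
    (τ₀ : ℝ)
    (hτ₀ : τ₀ = sInf ({t ∈ Set.Icc 0 T | f t ∉ I} ∪ {t ∈ Set.Icc 0 T | g t ∉ I}
      ∪ {T}))
    (hagree : ∀ t ∈ Set.Icc 0 T, f (min t τ₀) = g (min t τ₀))
    (hfI : ∀ t ∈ Set.Icc 0 T, f t ∈ I) :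
    ∀ t ∈ Set.Icc 0 T, f t = g t := by
  have hf_stays : {t ∈ Icc 0 T | f t ∉ I} = ∅ :=
    eq_empty_of_forall_notMem fun t ⟨ht, hft⟩ => hft (hfI t ht)
  have hτ₀_mem : τ₀ ∈ {t ∈ Icc 0 T | g t ∉ I} ∪ {T} := by
    rw [hτ₀, hf_stays, empty_union]
    exact hg.csInf_exitSet_union_singleton_mem hIopen
  -- At an exit time of `g` the two functions still agree, but `f` is in `I` and `g` is not.
  have hτ₀_eq : τ₀ = T := by
    rcases hτ₀_mem with ⟨hτ₀_Icc, hg_exit⟩ | hτ₀_T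
    · have hfg := hagree τ₀ hτ₀_Icc
      rw [min_self] at hfg
      exact absurd (hfg ▸ hfI τ₀ hτ₀_Icc) hg_exit
    · exact hτ₀_T
  intro t ht
  simpa [hτ₀_eq, ht.2] using hagree t ht

/-- If two continuous functions `f, g` on `[0,T]` agree up to the first exit time `τ₀`
of either of them from an open interval `I`, and `f` stays in `I` on all of `[0,T]`,
then `f = g` on `[0,T]`. -/
theorem stmt_8 (T : ℝ) (hT : 0 < T) (f g : ℝ → ℝ)
    (hf : ContinuousOn f (Set.Icc 0 T)) (hg : ContinuousOn g (Set.Icc 0 T))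
    (I : Set ℝ) (hIopen : IsOpen I) (hIconn : IsConnected I)
    (τ₀ : ℝ)
    (hτ₀ : τ₀ = sInf ({t ∈ Set.Icc 0 T | f t ∉ I} ∪ {t ∈ Set.Icc 0 T | g t ∉ I}
      ∪ {T}))
    (hagree : ∀ t ∈ Set.Icc 0 T, f (min t τ₀) = g (min t τ₀))
    (hfI : ∀ t ∈ Set.Icc 0 T, f t ∈ I) :
    ∀ t ∈ Set.Icc 0 T, f t = g t :=
  stmt_8_general T f g hg I hIopen τ₀ hτ₀ hagree hfI
end
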